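/- (Theorem 3, tightest bound B_1.) For every t > 0 and every λ > 0, (1/n) log ℙ(S_n ≥ n t) ≤ B(λ; c_*, v̄, K, K_1) − λ t; consequently (1/n) log ℙ(S_n ≥ n t) ≤ inf_{λ > 0} { B(λ; c_*, v̄, K, K_1) − λ t }. -/

import Mathlib

/-!
Chernoff: `ℙ(S_n ≥ n t) ≤ e^{-λ n t} ∏ 𝔼 e^{λ X_i}`. Since `X_i ≤ c_i` and `f₂` is increasing on
`[0, ∞)` (with `e^y ≤ 1 + y + y²/2` for `y ≤ 0`), `e^{λ X_i} ≤ 1 + λ X_i + λ² X_i² f₂(λ c_i)`, so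
`𝔼 e^{λ X_i} ≤ 1 + λ² σ_i² f₂(λ c_i) ≤ exp (λ² σ_i² f₂(λ c_i))`. The recursion
`f_k(u) = 1/k! + u f_{k+1}(u)` gives `f₂(x) = 1/2 + x/6 + x² f₄(x)`; with `r = c_i / c✶ ∈ [0, 1]`
and `f₄(λ c✶ r) ≤ f₄(λ c✶)` this yields
`f₂(λ c_i) ≤ 1/2 + r (f₂(λ c✶) − 1/2) − (λ c✶)² r (1 − r) f₄(λ c✶)`, and summing over `i` gives
`n B(λ)`. Taking logarithms, the bound for every `λ > 0` passes to the infimum.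
-/

open MeasureTheory ProbabilityTheory Real Finset

/-- `f k u = ∑_{j=0}^∞ u^j / (j+k)!`. -/
noncomputable def fSeries (k : ℕ) (u : ℝ) : ℝ := ∑' j : ℕ, u ^ j / (Nat.factorial (j + k) : ℝ)

/-- `B(λ; c✶, v̄, K, K₁) = (1/2) λ² v̄ + λ² K (f₂(λ c✶) − 1/2) − λ⁴ c✶² K₁ f₄(λ c✶)`. -/
noncomputable def Bbound (l cstar v K K1 : ℝ) : ℝ :=
  (1 / 2) * l ^ 2 * v + l ^ 2 * K * (fSeries 2 (l * cstar) - 1 / 2) -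
    l ^ 4 * cstar ^ 2 * K1 * fSeries 4 (l * cstar)

open scoped Nat

lemma summable_fSeries (k : ℕ) (u : ℝ) : Summable fun j : ℕ => u ^ j / ((j + k)! : ℝ) := by
  refine .of_norm_bounded (Real.summable_pow_div_factorial |u|) fun j => ?_
  rw [norm_div, norm_pow, Real.norm_eq_abs, Real.norm_natCast]
  gcongr
  exact Nat.le_add_right j k

lemma fSeries_eq_inv_factorial_add_mul (k : ℕ) (u : ℝ) :
    fSeries k u = 1 / (k ! : ℝ) + u * fSeries (k + 1) u := by
  rw [fSeries, (summable_fSeries k u).tsum_eq_zero_add, fSeries, ← tsum_mul_left]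
  congr 1
  · simp
  · refine tsum_congr fun j => ?_
    rw [show j + 1 + k = j + (k + 1) by ring, pow_succ]
    ring

lemma fSeries_zero : fSeries 0 = Real.exp := by
  ext u
  rw [Real.exp_eq_exp_ℝ, NormedSpace.exp_eq_tsum_div, fSeries]
  rfl

lemma fSeries_nonneg (k : ℕ) {u : ℝ} (hu : 0 ≤ u) : 0 ≤ fSeries k u :=
  tsum_nonneg fun _ => by positivity

lemma fSeries_le_fSeries (k : ℕ) {y u : ℝ} (hy : 0 ≤ y) (hyu : y ≤ u) :
    fSeries k y ≤ fSeries k u :=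
  (summable_fSeries k y).tsum_le_tsum (fun j => by gcongr) (summable_fSeries k u)

lemma inv_factorial_le_fSeries (k : ℕ) {u : ℝ} (hu : 0 ≤ u) : 1 / (k ! : ℝ) ≤ fSeries k u := by
  rw [fSeries_eq_inv_factorial_add_mul]
  have := fSeries_nonneg (k + 1) hu
  nlinarith

lemma exp_eq_one_add_add_sq_mul_fSeries_two (u : ℝ) :
    Real.exp u = 1 + u + u ^ 2 * fSeries 2 u := by
  rw [← fSeries_zero, fSeries_eq_inv_factorial_add_mul, fSeries_eq_inv_factorial_add_mul]
  norm_num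
  ring

lemma fSeries_two_eq (u : ℝ) : fSeries 2 u = 1 / 2 + u / 6 + u ^ 2 * fSeries 4 u := by
  rw [fSeries_eq_inv_factorial_add_mul, fSeries_eq_inv_factorial_add_mul]
  norm_num [Nat.factorial]
  ring

lemma exp_le_one_add_add_sq_div_two_of_nonpos {y : ℝ} (hy : y ≤ 0) :
    Real.exp y ≤ 1 + y + y ^ 2 / 2 := by
  have hcubic := Real.sum_le_exp_of_nonneg (neg_nonneg.2 hy) 4
  simp only [Finset.sum_range_succ, Finset.sum_range_zero] at hcubic
  norm_num [Nat.factorial] at hcubic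
  have hinv : Real.exp y * Real.exp (-y) = 1 := by
    rw [← Real.exp_add, add_neg_cancel, Real.exp_zero]
  nlinarith [Real.exp_pos y, mul_nonneg (sq_nonneg y) (neg_nonneg.2 hy)]

lemma exp_le_one_add_add_sq_mul_fSeries_two {y u : ℝ} (hu : 0 ≤ u) (hyu : y ≤ u) :
    Real.exp y ≤ 1 + y + y ^ 2 * fSeries 2 u := by
  rcases le_or_gt y 0 with hy | hy
  · have := inv_factorial_le_fSeries 2 hu
    norm_num [Nat.factorial] at this
    nlinarith [exp_le_one_add_add_sq_div_two_of_nonpos hy, sq_nonneg y]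
  · rw [exp_eq_one_add_add_sq_mul_fSeries_two]
    gcongr
    exact fSeries_le_fSeries 2 hy.le hyu

lemma fSeries_two_mul_le {u r : ℝ} (hu : 0 ≤ u) (hr₀ : 0 ≤ r) (hr₁ : r ≤ 1) :
    fSeries 2 (u * r) ≤ 1 / 2 + r * (fSeries 2 u - 1 / 2) - u ^ 2 * r * (1 - r) * fSeries 4 u := by
  have hmono : fSeries 4 (u * r) ≤ fSeries 4 u :=
    fSeries_le_fSeries 4 (by positivity) (mul_le_of_le_one_right hu hr₁)
  rw [fSeries_two_eq, fSeries_two_eq u]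
  nlinarith [mul_le_mul_of_nonneg_left hmono (sq_nonneg (u * r))]

lemma sq_mul_fSeries_two_le_Bbound {l s c cstar : ℝ} (hl : 0 ≤ l) (hs : 0 ≤ s) (hc : 0 ≤ c)
    (hccstar : c ≤ cstar) (hcstar : 0 < cstar) :
    l ^ 2 * s * fSeries 2 (l * c) ≤
      Bbound l cstar s (s * (c / cstar)) (s * (c / cstar) * (1 - c / cstar)) := by
  have hcomp := fSeries_two_mul_le (mul_nonneg hl hcstar.le) (div_nonneg hc hcstar.le)
    ((div_le_one hcstar).2 hccstar)
  rw [show l * cstar * (c / cstar) = l * c by field_simp] at hcomp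
  rw [Bbound]
  nlinarith [mul_le_mul_of_nonneg_left hcomp (by positivity : 0 ≤ l ^ 2 * s)]

lemma sum_Bbound {ι : Type*} (s : Finset ι) (l cstar : ℝ) (v K K1 : ι → ℝ) :
    ∑ i ∈ s, Bbound l cstar (v i) (K i) (K1 i) =
      Bbound l cstar (∑ i ∈ s, v i) (∑ i ∈ s, K i) (∑ i ∈ s, K1 i) := by
  simp only [Bbound, sum_sub_distrib, sum_add_distrib, mul_sum, sum_mul]

lemma mul_Bbound (a l cstar v K K1 : ℝ) :
    a * Bbound l cstar v K K1 = Bbound l cstar (a * v) (a * K) (a * K1) := by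
  simp only [Bbound]
  ring

lemma mgf_le_exp_sq_mul_variance_mul_fSeries_two {Ω : Type*} [MeasurableSpace Ω] {μ : Measure Ω}
    [IsProbabilityMeasure μ] {X : Ω → ℝ} {c l : ℝ} (hmean : ∫ ω, X ω ∂μ = 0) (hL2 : MemLp X 2 μ)
    (hc : 0 ≤ c) (hbdd : ∀ᵐ ω ∂μ, X ω ≤ c) (hl : 0 ≤ l) :
    mgf X μ l ≤ Real.exp (l ^ 2 * variance X μ * fSeries 2 (l * c)) := by
  set a := l ^ 2 * fSeries 2 (l * c) with ha
  have hX : Integrable X μ := hL2.integrable one_le_two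
  have hX2 : Integrable (fun ω => X ω ^ 2) μ := hL2.integrable_sq
  have hlin : Integrable (fun ω => 1 + l * X ω) μ := (integrable_const 1).add (hX.const_mul l)
  have hquad : Integrable (fun ω => 1 + l * X ω + a * X ω ^ 2) μ := hlin.add (hX2.const_mul a)
  have hsecond : ∫ ω, X ω ^ 2 ∂μ = variance X μ := by
    simp [variance_eq_integral hL2.aestronglyMeasurable.aemeasurable, hmean]
  calc mgf X μ l ≤ ∫ ω, (1 + l * X ω + a * X ω ^ 2) ∂μ := by
        refine integral_mono_ae
          (integrable_exp_mul_of_le l c hl hL2.aestronglyMeasurable.aemeasurable hbdd) hquad ?_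
        filter_upwards [hbdd] with ω hω
        have := exp_le_one_add_add_sq_mul_fSeries_two (y := l * X ω) (mul_nonneg hl hc)
          (mul_le_mul_of_nonneg_left hω hl)
        linarith
    _ = 1 + a * variance X μ := by
        rw [integral_add hlin (hX2.const_mul a),
          integral_add (integrable_const 1) (hX.const_mul l), integral_const_mul,
          integral_const_mul, hmean, hsecond]
        simp
    _ ≤ Real.exp (l ^ 2 * variance X μ * fSeries 2 (l * c)) := by
        rw [show l ^ 2 * variance X μ * fSeries 2 (l * c) = a * variance X μ by rw [ha]; ring]
        linarith [Real.add_one_le_exp (a * variance X μ)]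

lemma measureReal_le_exp_sum_sub_of_mgf_le {Ω ι : Type*} [MeasurableSpace Ω] {μ : Measure Ω}
    [IsProbabilityMeasure μ] [Fintype ι] {X : ι → Ω → ℝ} (hindep : iIndepFun X μ)
    (hmeas : ∀ i, Measurable (X i)) {l : ℝ} (hl : 0 ≤ l)
    (hint : ∀ i, Integrable (fun ω => Real.exp (l * X i ω)) μ) {g : ι → ℝ}
    (hg : ∀ i, mgf (X i) μ l ≤ Real.exp (g i)) (a : ℝ) :
    μ.real {ω | a ≤ ∑ i, X i ω} ≤ Real.exp (∑ i, g i - l * a) := by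
  have hchernoff := measure_ge_le_exp_mul_mgf (X := ∑ i, X i) a hl
    (hindep.integrable_exp_mul_sum hmeas (s := univ) fun i _ => hint i)
  simp only [Finset.sum_apply] at hchernoff
  calc _ ≤ Real.exp (-l * a) * mgf (∑ i, X i) μ l := hchernoff
    _ ≤ Real.exp (-l * a) * ∏ i, Real.exp (g i) := by
        rw [hindep.mgf_sum hmeas]
        gcongr with i
        · exact fun i _ => mgf_nonneg
        · exact hg i
    _ = Real.exp (∑ i, g i - l * a) := by
        rw [← Real.exp_sum, ← Real.exp_add]
        ring_nf

lemma le_exp_mul_csInf {s : Set ℝ} (hs : s.Nonempty) {p a : ℝ} (hp : 0 ≤ p) (ha : 0 < a)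
    (h : ∀ y ∈ s, p ≤ Real.exp (a * y)) : p ≤ Real.exp (a * sInf s) := by
  rcases hp.eq_or_lt with rfl | hp
  · exact (Real.exp_pos _).le
  have hlower : ∀ y ∈ s, Real.log p / a ≤ y := fun y hy =>
    (div_le_iff₀' ha).2 ((Real.log_le_iff_le_exp hp).2 (h y hy))
  exact (Real.log_le_iff_le_exp hp).1 ((div_le_iff₀' ha).1 (le_csInf hs hlower))

theorem theorem_three_tightest_bound_general
    {Ω : Type*} [MeasurableSpace Ω] (μ : Measure Ω) [IsProbabilityMeasure μ]
    (n : ℕ) (hn : 0 < n) (X : Fin n → Ω → ℝ) (σ c : Fin n → ℝ) (cstar : ℝ)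
    (hmeas : ∀ i, Measurable (X i))
    (hindep : iIndepFun X μ)
    (hmean : ∀ i, ∫ ω, X i ω ∂μ = 0)
    (hL2 : ∀ i, MemLp (X i) 2 μ)
    (hvar : ∀ i, variance (X i) μ = σ i ^ 2)
    (hcnonneg : ∀ i, 0 ≤ c i)
    (hbdd : ∀ i, ∀ᵐ ω ∂μ, X i ω ≤ c i)
    (hcmax : ∀ i, c i ≤ cstar) (hcpos : 0 < cstar)
    (v K K1 : ℝ)
    (hv : v = (1 / (n : ℝ)) * ∑ i, σ i ^ 2)
    (hK : K = (1 / (n : ℝ)) * ∑ i, σ i ^ 2 * (c i / cstar))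
    (hK1 : K1 = (1 / (n : ℝ)) * ∑ i, σ i ^ 2 * (c i / cstar) * (1 - c i / cstar))
    (t : ℝ) :
    (∀ l : ℝ, 0 < l →
      (μ {ω | (n : ℝ) * t ≤ ∑ i, X i ω}).toReal ≤
        Real.exp ((n : ℝ) * (Bbound l cstar v K K1 - l * t))) ∧
    (μ {ω | (n : ℝ) * t ≤ ∑ i, X i ω}).toReal ≤
      Real.exp ((n : ℝ) * sInf {y : ℝ | ∃ l : ℝ, 0 < l ∧ y = Bbound l cstar v K K1 - l * t}) := by
  have hn' : (0 : ℝ) < n := Nat.cast_pos.2 hn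
  have htail : ∀ l : ℝ, 0 < l → μ.real {ω | (n : ℝ) * t ≤ ∑ i, X i ω} ≤
      Real.exp ((n : ℝ) * (Bbound l cstar v K K1 - l * t)) := by
    intro l hl
    have hB : (n : ℝ) * Bbound l cstar v K K1 = ∑ i, Bbound l cstar (σ i ^ 2)
        (σ i ^ 2 * (c i / cstar)) (σ i ^ 2 * (c i / cstar) * (1 - c i / cstar)) := by
      rw [mul_Bbound, sum_Bbound, hv, hK, hK1]
      field_simp
    have hterm : ∀ i, l ^ 2 * σ i ^ 2 * fSeries 2 (l * c i) ≤ Bbound l cstar (σ i ^ 2)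
        (σ i ^ 2 * (c i / cstar)) (σ i ^ 2 * (c i / cstar) * (1 - c i / cstar)) := fun i =>
      sq_mul_fSeries_two_le_Bbound hl.le (sq_nonneg _) (hcnonneg i) (hcmax i) hcpos
    calc _ ≤ Real.exp (∑ i, l ^ 2 * σ i ^ 2 * fSeries 2 (l * c i) - l * (n * t)) :=
          measureReal_le_exp_sum_sub_of_mgf_le hindep hmeas hl.le
            (fun i => integrable_exp_mul_of_le l (c i) hl.le (hmeas i).aemeasurable (hbdd i))
            (fun i => hvar i ▸ mgf_le_exp_sq_mul_variance_mul_fSeries_two (hmean i) (hL2 i)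
              (hcnonneg i) (hbdd i) hl.le) _
      _ ≤ Real.exp ((n : ℝ) * (Bbound l cstar v K K1 - l * t)) := by
          rw [Real.exp_le_exp]
          linarith [sum_le_sum fun i (_ : i ∈ univ) => hterm i]
  refine ⟨htail, le_exp_mul_csInf ?_ ENNReal.toReal_nonneg hn' ?_⟩
  · exact ⟨_, 1, one_pos, rfl⟩
  · rintro y ⟨l, hl, rfl⟩
    exact htail l hl

/-- **Theorem 3, tightest bound `B₁`.** With the setup of Lemma 1, for every `t > 0` and
every `λ > 0`, `ℙ(S_n ≥ n t) ≤ exp (n (B(λ) − λ t))`, i.e.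
`(1/n) log ℙ(S_n ≥ n t) ≤ B(λ; c✶, v̄, K, K₁) − λ t`; consequently
`(1/n) log ℙ(S_n ≥ n t) ≤ inf_{λ > 0} {B(λ; c✶, v̄, K, K₁) − λ t}`. -/
theorem theorem_three_tightest_bound
    {Ω : Type*} [MeasurableSpace Ω] (μ : Measure Ω) [IsProbabilityMeasure μ]
    (n : ℕ) (hn : 0 < n) (X : Fin n → Ω → ℝ) (σ c : Fin n → ℝ) (cstar : ℝ)
    (hmeas : ∀ i, Measurable (X i))
    (hindep : iIndepFun X μ)
    (hmean : ∀ i, ∫ ω, X i ω ∂μ = 0)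
    (hL2 : ∀ i, MemLp (X i) 2 μ)
    (hvar : ∀ i, variance (X i) μ = σ i ^ 2)
    (hcnonneg : ∀ i, 0 ≤ c i)
    (hbdd : ∀ i, ∀ᵐ ω ∂μ, X i ω ≤ c i)
    (hcmax : ∀ i, c i ≤ cstar) (hcattained : ∃ i, c i = cstar) (hcpos : 0 < cstar)
    (v K K1 : ℝ)
    (hv : v = (1 / (n : ℝ)) * ∑ i, σ i ^ 2)
    (hK : K = (1 / (n : ℝ)) * ∑ i, σ i ^ 2 * (c i / cstar))
    (hK1 : K1 = (1 / (n : ℝ)) * ∑ i, σ i ^ 2 * (c i / cstar) * (1 - c i / cstar))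
    (t : ℝ) (ht : 0 < t) :
    (∀ l : ℝ, 0 < l →
      (μ {ω | (n : ℝ) * t ≤ ∑ i, X i ω}).toReal ≤
        Real.exp ((n : ℝ) * (Bbound l cstar v K K1 - l * t))) ∧
    (μ {ω | (n : ℝ) * t ≤ ∑ i, X i ω}).toReal ≤
      Real.exp ((n : ℝ) * sInf {y : ℝ | ∃ l : ℝ, 0 < l ∧ y = Bbound l cstar v K K1 - l * t}) :=
  theorem_three_tightest_bound_general μ n hn X σ c cstar hmeas hindep hmean hL2 hvar hcnonneg hbdd
    hcmax hcpos v K K1 hv hK hK1 t
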